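/- arXiv:1309.1451 — 5 statements merged into one kernel-verified Lean document; each statement's English description precedes it below -/
import Mathlib

section
/- If A is an associative algebra containing C(ℝ) (the continuous functions on ℝ) as a subalgebra with the constant function 1 as unit, and D : A → A is a linear map extending the usual derivative on continuously differentiable functions and satisfying the Leibniz rule D(ab) = D(a)b + aD(b), then D²(|x|) = 0 in A. -/
/-!
Write `t`, `s`, `l` for the images of `x`, `|x|` and `x log |x|`, so that `D t = 1`.
Since `(x |x|)' = 2 |x|`, the Leibniz rule gives `t D s = s`, and differentiating once more,
`t D²s = 0`. Since `(x² log |x|)' = 2 x log |x| + x`, it gives `(D l) t = l + t`, and then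
`(D²l) t = 1`. So `t` has a left inverse and `D²s = 0`.
-/

theorem hasDerivAt_id_mul_of_continuousAt_zero {g : ℝ → ℝ} (hg : ContinuousAt g 0) :
    HasDerivAt (fun y => y * g y) (g 0) 0 := by
  rw [hasDerivAt_iff_tendsto_slope]
  refine (hg.tendsto.mono_left nhdsWithin_le_nhds).congr' ?_
  filter_upwards [self_mem_nhdsWithin] with y (hy : y ≠ 0)
  simp [slope_def_field, hy]

theorem hasDerivAt_mul_abs (x : ℝ) : HasDerivAt (fun y => y * |y|) (|x| + |x|) x := by
  rcases eq_or_ne x 0 with rfl | hx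
  · simpa using hasDerivAt_id_mul_of_continuousAt_zero continuous_abs.continuousAt
  · simpa using (hasDerivAt_id' x).fun_mul (hasDerivAt_abs hx)

theorem hasDerivAt_mul_mul_log (x : ℝ) :
    HasDerivAt (fun y => y * (y * Real.log y)) (x * Real.log x + x * Real.log x + x) x := by
  rcases eq_or_ne x 0 with rfl | hx
  · simpa using hasDerivAt_id_mul_of_continuousAt_zero Real.continuous_mul_log.continuousAt
  · exact ((hasDerivAt_id' x).fun_mul (Real.hasDerivAt_mul_log hx)).congr_deriv (by ring)

section Leibniz

variable {A F : Type*} [Ring A] [FunLike F A A] (D : F)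

theorem mul_map_map_eq_zero_of_map_mul_eq_add_self
    (hLeib : ∀ a b, D (a * b) = D a * b + a * D b) {t s : A} (ht : D t = 1)
    (hs : D (t * s) = s + s) : t * D (D s) = 0 := by
  have hts : t * D s = s := by
    rw [hLeib, ht, one_mul] at hs
    exact add_left_cancel hs
  have := congrArg D hts
  rw [hLeib, ht, one_mul] at this
  simpa using this

theorem map_map_mul_eq_one_of_map_mul_eq_add_add [AddMonoidHomClass F A A]
    (hLeib : ∀ a b, D (a * b) = D a * b + a * D b) {t l : A} (ht : D t = 1)
    (hl : D (l * t) = l + l + t) : D (D l) * t = 1 := by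
  have hlt : D l * t = l + t := by
    rw [hLeib, ht, mul_one, add_right_comm] at hl
    exact add_right_cancel hl
  have := congrArg D hlt
  rw [hLeib, ht, mul_one, map_add, ht, add_comm] at this
  exact add_left_cancel this

end Leibniz

theorem map_eq_of_hasDerivAt {A : Type*} [Ring A] [Algebra ℝ A] (j : C(ℝ, ℝ) →ₐ[ℝ] A)
    (D : A → A)
    (hext : ∀ (f : ℝ → ℝ) (hf : ContDiff ℝ 1 f),
      D (j ⟨f, hf.continuous⟩) = j ⟨deriv f, hf.continuous_deriv le_rfl⟩)
    {f f' : C(ℝ, ℝ)} (hf : ∀ x, HasDerivAt f (f' x) x) : D (j f) = j f' := by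
  have hderiv : deriv f = f' := funext fun x => (hf x).deriv
  have hC1 : ContDiff ℝ 1 f := contDiff_one_iff_deriv.2
    ⟨fun x => (hf x).differentiableAt, hderiv ▸ f'.continuous⟩
  calc D (j f) = j ⟨deriv f, hC1.continuous_deriv le_rfl⟩ := hext f hC1
    _ = j f' := by congr 1; ext x; exact congrFun hderiv x

theorem schwartz_impossibility_general
    (A : Type*) [Ring A] [Algebra ℝ A]
    (j : C(ℝ, ℝ) →ₐ[ℝ] A)
    (D : A →ₗ[ℝ] A)
    (hLeib : ∀ a b : A, D (a * b) = D a * b + a * D b)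
    (hext : ∀ (f : ℝ → ℝ) (hf : ContDiff ℝ 1 f),
      D (j ⟨f, hf.continuous⟩) = j ⟨deriv f, hf.continuous_deriv le_rfl⟩) :
    D (D (j ⟨fun x => |x|, continuous_abs⟩)) = 0 := by
  set t := j (ContinuousMap.id ℝ)
  set s := j ⟨fun x => |x|, continuous_abs⟩
  -- `Real.log x = Real.log |x|`, so this is `x log |x|`.
  set l := j ⟨fun x => x * Real.log x, Real.continuous_mul_log⟩
  have hDt : D t = 1 := by
    rw [map_eq_of_hasDerivAt j D hext (f' := 1) hasDerivAt_id, map_one]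
  have hDts : D (t * s) = s + s := by
    rw [← map_mul, ← map_add]
    exact map_eq_of_hasDerivAt j D hext hasDerivAt_mul_abs
  have hDlt : D (l * t) = l + l + t := by
    rw [← map_mul, ← map_add, ← map_add]
    refine map_eq_of_hasDerivAt j D hext fun x => ?_
    convert hasDerivAt_mul_mul_log x using 1
    · exact funext fun y => mul_comm _ _
    · rfl
  calc D (D s) = (D (D l) * t) * D (D s) := by
        rw [map_map_mul_eq_one_of_map_mul_eq_add_add D hLeib hDt hDlt, one_mul]
    _ = 0 := by
        rw [mul_assoc, mul_map_map_eq_zero_of_map_mul_eq_add_self D hLeib hDt hDts, mul_zero]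

/-- Schwartz impossibility result: if `A` is an associative algebra containing `C(ℝ)` as a
subalgebra (via an injective algebra homomorphism `j`) with the constant function `1` as unit,
and `D : A → A` is a linear map satisfying the Leibniz rule and extending the derivative of
continuously differentiable functions, then `D²(|x|) = 0`. -/
theorem schwartz_impossibility
    (A : Type*) [Ring A] [Algebra ℝ A]
    (j : C(ℝ, ℝ) →ₐ[ℝ] A) (hj : Function.Injective j)
    (D : A →ₗ[ℝ] A)
    (hLeib : ∀ a b : A, D (a * b) = D a * b + a * D b)
    (hext : ∀ (f : ℝ → ℝ) (hf : ContDiff ℝ 1 f),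
      D (j ⟨f, hf.continuous⟩) = j ⟨deriv f, hf.continuous_deriv le_rfl⟩) :
    D (D (j ⟨fun x => |x|, continuous_abs⟩)) = 0 :=
  schwartz_impossibility_general A j D hLeib hext
end

section
/- A net (u_ε)_ε ∈ C^∞(Ω)^{(0,1]} satisfying the moderateness bound sup_{x∈K}|∂^α u_ε(x)| = O(ε^{-N(K,α)}) is negligible if and only if for every compact K ⊂⊂ Ω and every m ∈ ℕ one has sup_{x∈K}|u_ε(x)| = O(ε^m); i.e., for moderate nets, negligibility of the zeroth-order estimates implies negligibility of all derivatives. -/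
open Set Metric

section oneD
variable {F : Type*} [NormedAddCommGroup F] [NormedSpace ℝ F]

/-- Taylor-type estimate: a bound on `g` on `[0,r]` plus a Lipschitz-type bound on `g'`
controls `g' 0`. -/
lemma oneD {g g' : ℝ → F} {r M0 L : ℝ} (hr : 0 < r)
    (hg : ∀ t ∈ Set.Icc (0:ℝ) r, HasDerivAt g (g' t) t)
    (hlip : ∀ t ∈ Set.Icc (0:ℝ) r, ‖g' t - g' 0‖ ≤ L)
    (h0 : ∀ t ∈ Set.Icc (0:ℝ) r, ‖g t‖ ≤ M0) :
    ‖g' 0‖ ≤ 2 * M0 / r + L := by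
  have hd : ∀ t ∈ Set.Icc (0:ℝ) r,
      HasDerivWithinAt (fun t => g t - t • g' 0) (g' t - g' 0) (Set.Icc 0 r) t := by
    intro t ht
    have h1 : HasDerivAt (fun t : ℝ => t • g' 0) ((1:ℝ) • g' 0) t :=
      (hasDerivAt_id t).smul_const (g' 0)
    have h2 := ((hg t ht).sub h1).hasDerivWithinAt (s := Set.Icc 0 r)
    rw [one_smul] at h2
    exact h2
  have key := norm_image_sub_le_of_norm_deriv_le_segment' hd
    (fun t ht => hlip t (Set.Ico_subset_Icc_self ht)) r (Set.right_mem_Icc.2 hr.le)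
  simp only [zero_smul, sub_zero] at key
  have key' : ‖(g r - g 0) - r • g' 0‖ ≤ L * r := by
    have h : g r - r • g' 0 - g 0 = g r - g 0 - r • g' 0 := by abel
    simpa [h] using key
  have hgr := h0 r (Set.right_mem_Icc.2 hr.le)
  have hg0 := h0 0 (Set.left_mem_Icc.2 hr.le)
  have h1 : ‖r • g' 0‖ ≤ 2 * M0 + L * r := by
    calc ‖r • g' 0‖ = ‖(g r - g 0) - ((g r - g 0) - r • g' 0)‖ := by congr 1; abel
      _ ≤ ‖g r - g 0‖ + ‖(g r - g 0) - r • g' 0‖ := norm_sub_le _ _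
      _ ≤ (M0 + M0) + L * r := add_le_add ((norm_sub_le _ _).trans (add_le_add hgr hg0)) key'
      _ = 2 * M0 + L * r := by ring
  have h2 : r * ‖g' 0‖ ≤ 2 * M0 + L * r := by
    rwa [norm_smul, Real.norm_eq_abs, abs_of_pos hr] at h1
  calc ‖g' 0‖ = (r * ‖g' 0‖) / r := by field_simp
    _ ≤ (2 * M0 + L * r) / r := by gcongr
    _ = 2 * M0 / r + L := by field_simp

end oneD

section interp
variable {E F : Type*} [NormedAddCommGroup E] [NormedSpace ℝ E]
  [NormedAddCommGroup F] [NormedSpace ℝ F]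

/-- Landau–Kolmogorov type interpolation: on a closed ball inside the open set where `f` is
smooth, a bound on the `k`-th derivative and on the `(k+2)`-th derivative controls the
`(k+1)`-th derivative at the center. -/
lemma interp {Ω : Set E} (hΩ : IsOpen Ω) {f : E → F}
    (hf : ∀ y ∈ Ω, ContDiffAt ℝ (⊤ : ℕ∞) f y) (k : ℕ) (x : E) {r M0 M2 : ℝ} (hr : 0 < r)
    (hball : Metric.closedBall x r ⊆ Ω)
    (h0 : ∀ y ∈ Metric.closedBall x r, ‖iteratedFDeriv ℝ k f y‖ ≤ M0)
    (h2 : ∀ y ∈ Metric.closedBall x r, ‖iteratedFDeriv ℝ (k+2) f y‖ ≤ M2) :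
    ‖iteratedFDeriv ℝ (k+1) f x‖ ≤ 2 * M0 / r + M2 * r := by
  have hxΩ : x ∈ Ω := hball (Metric.mem_closedBall_self hr.le)
  have hM0 : 0 ≤ M0 := le_trans (norm_nonneg _) (h0 x (Metric.mem_closedBall_self hr.le))
  have hM2 : 0 ≤ M2 := le_trans (norm_nonneg _) (h2 x (Metric.mem_closedBall_self hr.le))
  have hF1 : ∀ y ∈ Ω, DifferentiableAt ℝ (iteratedFDeriv ℝ k f) y := fun y hy =>
    ((hf y hy).iteratedFDeriv_right (m := 1) (by exact_mod_cast le_top)).differentiableAt one_ne_zero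
  have hG : ∀ y ∈ Ω, DifferentiableAt ℝ (iteratedFDeriv ℝ (k+1) f) y := fun y hy =>
    ((hf y hy).iteratedFDeriv_right (m := 1) (by exact_mod_cast le_top)).differentiableAt one_ne_zero
  -- Lipschitz bound on the (k+1)-th derivative from the (k+2)-th derivative
  have hlipG : ∀ y ∈ Metric.closedBall x r,
      ‖iteratedFDeriv ℝ (k+1) f y - iteratedFDeriv ℝ (k+1) f x‖ ≤ M2 * ‖y - x‖ := by
    intro y hy
    refine (convex_closedBall x r).norm_image_sub_le_of_norm_fderiv_le
      (fun z hz => hG z (hball hz)) (fun z hz => ?_)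
      (Metric.mem_closedBall_self hr.le) hy
    rw [norm_fderiv_iteratedFDeriv]
    exact h2 z hz
  -- transfer to the derivative of the k-th derivative
  have hD : ∀ y ∈ Metric.closedBall x r,
      ‖fderiv ℝ (iteratedFDeriv ℝ k f) y - fderiv ℝ (iteratedFDeriv ℝ k f) x‖ ≤ M2 * ‖y - x‖ := by
    intro y hy
    have e := continuousMultilinearCurryLeftEquiv ℝ (fun _ : Fin (k + 1) => E) F
    have hy' : iteratedFDeriv ℝ (k+1) f y
        = (continuousMultilinearCurryLeftEquiv ℝ (fun _ : Fin (k + 1) => E) F).symm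
          (fderiv ℝ (iteratedFDeriv ℝ k f) y) :=
      congrFun (iteratedFDeriv_succ_eq_comp_left) y
    have hx' : iteratedFDeriv ℝ (k+1) f x
        = (continuousMultilinearCurryLeftEquiv ℝ (fun _ : Fin (k + 1) => E) F).symm
          (fderiv ℝ (iteratedFDeriv ℝ k f) x) :=
      congrFun (iteratedFDeriv_succ_eq_comp_left) x
    calc ‖fderiv ℝ (iteratedFDeriv ℝ k f) y - fderiv ℝ (iteratedFDeriv ℝ k f) x‖
        = dist (fderiv ℝ (iteratedFDeriv ℝ k f) y) (fderiv ℝ (iteratedFDeriv ℝ k f) x) :=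
          (dist_eq_norm (fderiv ℝ (iteratedFDeriv ℝ k f) y) (fderiv ℝ (iteratedFDeriv ℝ k f) x)).symm
      _ = dist ((continuousMultilinearCurryLeftEquiv ℝ (fun _ : Fin (k + 1) => E) F).symm
            (fderiv ℝ (iteratedFDeriv ℝ k f) y))
            ((continuousMultilinearCurryLeftEquiv ℝ (fun _ : Fin (k + 1) => E) F).symm
            (fderiv ℝ (iteratedFDeriv ℝ k f) x)) :=
          (LinearIsometryEquiv.dist_map
            (continuousMultilinearCurryLeftEquiv ℝ (fun _ : Fin (k + 1) => E) F).symm _ _).symm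
      _ = ‖iteratedFDeriv ℝ (k+1) f y - iteratedFDeriv ℝ (k+1) f x‖ := by
          rw [← hy', ← hx', dist_eq_norm]
      _ ≤ M2 * ‖y - x‖ := hlipG y hy
  rw [← norm_fderiv_iteratedFDeriv]
  refine ContinuousLinearMap.opNorm_le_bound _ (by positivity) (fun v => ?_)
  rcases eq_or_ne v 0 with rfl | hv
  · simp
  · have hvn : ‖v‖ ≠ 0 := norm_ne_zero_iff.2 hv
    set w := ‖v‖⁻¹ • v with hw
    have hwn : ‖w‖ = 1 := by
      rw [hw, norm_smul, norm_inv, norm_norm, inv_mul_cancel₀ hvn]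
    have hmem : ∀ t ∈ Set.Icc (0:ℝ) r, x + t • w ∈ Metric.closedBall x r := by
      intro t ht
      simp only [Metric.mem_closedBall, dist_eq_norm, add_sub_cancel_left, norm_smul, hwn,
        Real.norm_eq_abs, mul_one, abs_of_nonneg ht.1]
      exact ht.2
    have hgd : ∀ t ∈ Set.Icc (0:ℝ) r,
        HasDerivAt (fun t => iteratedFDeriv ℝ k f (x + t • w))
          (fderiv ℝ (iteratedFDeriv ℝ k f) (x + t • w) w) t := by
      intro t ht
      have hline : HasDerivAt (fun t : ℝ => x + t • w) w t := by
        simpa using ((hasDerivAt_id t).smul_const w).const_add x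
      exact (hF1 _ (hball (hmem t ht))).hasFDerivAt.comp_hasDerivAt t hline
    have hlip' : ∀ t ∈ Set.Icc (0:ℝ) r,
        ‖fderiv ℝ (iteratedFDeriv ℝ k f) (x + t • w) w
          - fderiv ℝ (iteratedFDeriv ℝ k f) (x + (0:ℝ) • w) w‖ ≤ M2 * r := by
      intro t ht
      have h := hD (x + t • w) (hmem t ht)
      calc ‖fderiv ℝ (iteratedFDeriv ℝ k f) (x + t • w) w
            - fderiv ℝ (iteratedFDeriv ℝ k f) (x + (0:ℝ) • w) w‖
          = ‖(fderiv ℝ (iteratedFDeriv ℝ k f) (x + t • w)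
              - fderiv ℝ (iteratedFDeriv ℝ k f) x) w‖ := by
            simp [ContinuousLinearMap.sub_apply]
        _ ≤ ‖fderiv ℝ (iteratedFDeriv ℝ k f) (x + t • w)
              - fderiv ℝ (iteratedFDeriv ℝ k f) x‖ * ‖w‖ :=
            ContinuousLinearMap.le_opNorm _ _
        _ ≤ (M2 * ‖x + t • w - x‖) * 1 := by rw [hwn]; exact mul_le_mul_of_nonneg_right h zero_le_one
        _ ≤ M2 * r := by
            rw [mul_one, add_sub_cancel_left, norm_smul, hwn, mul_one, Real.norm_eq_abs,
              abs_of_nonneg ht.1]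
            exact mul_le_mul_of_nonneg_left ht.2 hM2
    have h0' : ∀ t ∈ Set.Icc (0:ℝ) r, ‖iteratedFDeriv ℝ k f (x + t • w)‖ ≤ M0 :=
      fun t ht => h0 _ (hmem t ht)
    have hkey := oneD hr hgd hlip' h0'
    -- hkey : ‖fderiv (itFD k f) (x + 0 • w) w‖ ≤ 2 * M0 / r + M2 * r
    simp only [zero_smul, add_zero] at hkey
    have hvw : fderiv ℝ (iteratedFDeriv ℝ k f) x v
        = ‖v‖ • fderiv ℝ (iteratedFDeriv ℝ k f) x w := by
      rw [hw, map_smul, smul_smul, mul_inv_cancel₀ hvn, one_smul]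
    rw [hvw, norm_smul ‖v‖ (fderiv ℝ (iteratedFDeriv ℝ k f) x w), Real.norm_eq_abs,
      abs_of_nonneg (norm_nonneg v), mul_comm]
    exact mul_le_mul_of_nonneg_right hkey (norm_nonneg v)

end interp



/-- A net `(u_ε)_ε` of smooth functions on `Ω` is moderate if for every compact `K ⊂⊂ Ω` and
every derivative order `k` there is `N` with `sup_{x∈K} ‖∂^k u_ε(x)‖ = O(ε^{-N})` as `ε → 0⁺`. -/
def Moderate (n : ℕ) (Ω : Set (Fin n → ℝ)) (u : ℝ → (Fin n → ℝ) → ℝ) : Prop :=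
  ∀ K : Set (Fin n → ℝ), K ⊆ Ω → IsCompact K → ∀ k : ℕ,
    ∃ N : ℕ, ∃ C > (0:ℝ), ∃ ε₀ ∈ Set.Ioc (0:ℝ) 1, ∀ ε ∈ Set.Ioc (0:ℝ) ε₀, ∀ x ∈ K,
      ‖iteratedFDerivWithin ℝ k (u ε) Ω x‖ ≤ C * ε ^ (-(N:ℤ))

/-- A net `(u_ε)_ε` of smooth functions on `Ω` is negligible if for every compact `K ⊂⊂ Ω`,
every derivative order `k` and every `m`, `sup_{x∈K} ‖∂^k u_ε(x)‖ = O(ε^m)` as `ε → 0⁺`. -/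
def Negligible (n : ℕ) (Ω : Set (Fin n → ℝ)) (u : ℝ → (Fin n → ℝ) → ℝ) : Prop :=
  ∀ K : Set (Fin n → ℝ), K ⊆ Ω → IsCompact K → ∀ k : ℕ, ∀ m : ℕ,
    ∃ C > (0:ℝ), ∃ ε₀ ∈ Set.Ioc (0:ℝ) 1, ∀ ε ∈ Set.Ioc (0:ℝ) ε₀, ∀ x ∈ K,
      ‖iteratedFDerivWithin ℝ k (u ε) Ω x‖ ≤ C * ε ^ m

/-- For a moderate net `(u_ε)_ε`, negligibility is equivalent to the zeroth-order estimates: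
`sup_{x∈K} |u_ε(x)| = O(ε^m)` for all compact `K ⊂⊂ Ω` and all `m`. -/
theorem negligible_iff_zeroth_order (n : ℕ) (Ω : Set (Fin n → ℝ)) (hΩ : IsOpen Ω)
    (u : ℝ → (Fin n → ℝ) → ℝ)
    (hu : ∀ ε ∈ Set.Ioc (0:ℝ) 1, ContDiffOn ℝ (⊤ : ℕ∞) (u ε) Ω)
    (hum : Moderate n Ω u) :
    Negligible n Ω u ↔
      ∀ K : Set (Fin n → ℝ), K ⊆ Ω → IsCompact K → ∀ m : ℕ,
        ∃ C > (0:ℝ), ∃ ε₀ ∈ Set.Ioc (0:ℝ) 1, ∀ ε ∈ Set.Ioc (0:ℝ) ε₀, ∀ x ∈ K,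
          |u ε x| ≤ C * ε ^ m := by
  constructor
  · intro hneg K hKΩ hK m
    obtain ⟨C, hC, ε₀, hε₀, hb⟩ := hneg K hKΩ hK 0 m
    refine ⟨C, hC, ε₀, hε₀, fun ε hε x hx => ?_⟩
    have := hb ε hε x hx
    rwa [norm_iteratedFDerivWithin_zero, Real.norm_eq_abs] at this
  · intro h
    have main : ∀ k : ℕ, ∀ K : Set (Fin n → ℝ), K ⊆ Ω → IsCompact K → ∀ m : ℕ,
        ∃ C > (0:ℝ), ∃ ε₀ ∈ Set.Ioc (0:ℝ) 1, ∀ ε ∈ Set.Ioc (0:ℝ) ε₀, ∀ x ∈ K,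
          ‖iteratedFDeriv ℝ k (u ε) x‖ ≤ C * ε ^ m := by
      intro k
      induction k with
      | zero =>
        intro K hKΩ hK m
        obtain ⟨C, hC, ε₀, hε₀, hb⟩ := h K hKΩ hK m
        refine ⟨C, hC, ε₀, hε₀, fun ε hε x hx => ?_⟩
        rw [norm_iteratedFDeriv_zero, Real.norm_eq_abs]
        exact hb ε hε x hx
      | succ k IH =>
        intro K hKΩ hK m
        obtain ⟨δ, hδ, hKδ⟩ := hK.exists_cthickening_subset_open hΩ hKΩ
        have hK'c : IsCompact (cthickening δ K) := hK.cthickening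
        obtain ⟨N, C₂, hC₂, ε₂, hε₂, hb₂⟩ := hum (cthickening δ K) hKδ hK'c (k+2)
        obtain ⟨C₀, hC₀, ε₁, hε₁, hb₁⟩ := IH (cthickening δ K) hKδ hK'c (2*m+N)
        refine ⟨2*C₀/δ + C₂*δ, by positivity, min ε₁ ε₂,
          ⟨lt_min hε₁.1 hε₂.1, (min_le_left _ _).trans hε₁.2⟩, fun ε hε x hx => ?_⟩
        have hε1 : ε ∈ Set.Ioc (0:ℝ) ε₁ := ⟨hε.1, hε.2.trans (min_le_left _ _)⟩
        have hε2 : ε ∈ Set.Ioc (0:ℝ) ε₂ := ⟨hε.1, hε.2.trans (min_le_right _ _)⟩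
        have hε01 : ε ∈ Set.Ioc (0:ℝ) 1 := ⟨hε.1, hε1.2.trans hε₁.2⟩
        set r := δ * ε ^ (N + m) with hrdef
        have hrpos : 0 < r := by
          have := hε.1; positivity
        have hrle : r ≤ δ := mul_le_of_le_one_right hδ.le (pow_le_one₀ hε.1.le hε01.2)
        have hball : Metric.closedBall x r ⊆ cthickening δ K := fun y hy =>
          mem_cthickening_of_dist_le y x δ K hx ((Metric.mem_closedBall.mp hy).trans hrle)
        have hballΩ : Metric.closedBall x r ⊆ Ω := hball.trans hKδ
        have h0 : ∀ y ∈ Metric.closedBall x r,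
            ‖iteratedFDeriv ℝ k (u ε) y‖ ≤ C₀ * ε ^ (2*m+N) :=
          fun y hy => hb₁ ε hε1 y (hball hy)
        have h2 : ∀ y ∈ Metric.closedBall x r,
            ‖iteratedFDeriv ℝ (k+2) (u ε) y‖ ≤ C₂ * ε ^ (-(N:ℤ)) := by
          intro y hy
          have := hb₂ ε hε2 y (hball hy)
          rwa [iteratedFDerivWithin_of_isOpen _ hΩ (hKδ (hball hy))] at this
        have key := interp hΩ (fun y hy => (hu ε hε01).contDiffAt (hΩ.mem_nhds hy))
          k x hrpos hballΩ h0 h2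
        refine key.trans (le_of_eq ?_)
        have hεne : (ε:ℝ) ≠ 0 := hε.1.ne'
        have hpow1 : (ε:ℝ) ^ (2*m+N) = ε ^ (N+m) * ε ^ m := by
          rw [← pow_add]; ring_nf
        have hpow2 : (ε:ℝ) ^ (-(N:ℤ)) = (ε ^ N)⁻¹ := by
          rw [zpow_neg, zpow_natCast]
        rw [hrdef, hpow1, hpow2, pow_add]
        have hεN : (ε:ℝ) ^ N ≠ 0 := pow_ne_zero _ hεne
        have hεNm : (ε:ℝ) ^ (N+m) ≠ 0 := pow_ne_zero _ hεne
        field_simp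
    intro K hKΩ hK k m
    obtain ⟨C, hC, ε₀, hε₀, hb⟩ := main k K hKΩ hK m
    refine ⟨C, hC, ε₀, hε₀, fun ε hε x hx => ?_⟩
    rw [iteratedFDerivWithin_of_isOpen _ hΩ (hKΩ hx)]
    exact hb ε hε x hx
end

section
/- Let H be the Heaviside function and (δ_ε)_ε a strict delta net on ℝ: δ_ε smooth, supp δ_ε ⊆ [−ε,ε], ∫δ_ε = 1, and ∫|δ_ε| uniformly bounded. Let H_ε(u) = ∫_{−∞}^u δ_ε(s)ds. Then the net (H_ε·δ_ε)_ε converges in 𝒟'(ℝ) to c·δ where c = lim ∫ H_ε δ_ε whenever this limit exists; in particular if δ_ε is even for each ε, then H_ε·δ_ε → (1/2)δ in 𝒟'(ℝ). -/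
open MeasureTheory

/-- Let `(δ_ε)` be a strict delta net on `ℝ` (smooth, `supp δ_ε ⊆ [−ε,ε]`, `∫ δ_ε = 1`,
`∫ |δ_ε|` uniformly bounded) and `H_ε(u) = ∫_{−∞}^u δ_ε`. Then `(H_ε·δ_ε)_ε → c·δ` in
`𝒟'(ℝ)` whenever `c = lim ∫ H_ε δ_ε` exists; in particular if each `δ_ε` is even then
`H_ε·δ_ε → (1/2)·δ`. -/
theorem heaviside_times_delta_net (δ : ℝ → ℝ → ℝ)
    (hsm : ∀ ε ∈ Set.Ioc (0:ℝ) 1, ContDiff ℝ (⊤ : ℕ∞) (δ ε))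
    (hsupp : ∀ ε ∈ Set.Ioc (0:ℝ) 1, tsupport (δ ε) ⊆ Set.Icc (-ε) ε)
    (hint : ∀ ε ∈ Set.Ioc (0:ℝ) 1, ∫ s, δ ε s = 1)
    (hbd : ∃ M : ℝ, ∀ ε ∈ Set.Ioc (0:ℝ) 1, (∫ s, |δ ε s|) ≤ M) :
    (∀ c : ℝ,
      Filter.Tendsto (fun ε => ∫ u, (∫ s in Set.Iic u, δ ε s) * δ ε u)
        (nhdsWithin 0 (Set.Ioi 0)) (nhds c) →
      ∀ ψ : ℝ → ℝ, ContDiff ℝ (⊤ : ℕ∞) ψ → HasCompactSupport ψ →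
        Filter.Tendsto (fun ε => ∫ u, (∫ s in Set.Iic u, δ ε s) * δ ε u * ψ u)
          (nhdsWithin 0 (Set.Ioi 0)) (nhds (c * ψ 0))) ∧
    ((∀ ε ∈ Set.Ioc (0:ℝ) 1, ∀ s, δ ε (-s) = δ ε s) →
      ∀ ψ : ℝ → ℝ, ContDiff ℝ (⊤ : ℕ∞) ψ → HasCompactSupport ψ →
        Filter.Tendsto (fun ε => ∫ u, (∫ s in Set.Iic u, δ ε s) * δ ε u * ψ u)
          (nhdsWithin 0 (Set.Ioi 0)) (nhds ((1/2) * ψ 0))) := by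
  classical
  obtain ⟨M₀, hM₀⟩ := hbd
  set M : ℝ := max M₀ 1 with hMdef
  have hM1 : (1:ℝ) ≤ M := le_max_right _ _
  have hM0 : (0:ℝ) < M := lt_of_lt_of_le one_pos hM1
  have hMb : ∀ ε ∈ Set.Ioc (0:ℝ) 1, (∫ s, |δ ε s|) ≤ M := fun ε hε =>
    le_trans (hM₀ ε hε) (le_max_left _ _)
  have hcont : ∀ ε ∈ Set.Ioc (0:ℝ) 1, Continuous (δ ε) := fun ε hε => (hsm ε hε).continuous
  have hcs : ∀ ε ∈ Set.Ioc (0:ℝ) 1, HasCompactSupport (δ ε) := fun ε hε =>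
    IsCompact.of_isClosed_subset isCompact_Icc (isClosed_tsupport _) (hsupp ε hε)
  have hI : ∀ ε ∈ Set.Ioc (0:ℝ) 1, Integrable (δ ε) := fun ε hε =>
    (hcont ε hε).integrable_of_hasCompactSupport (hcs ε hε)
  have hHbd : ∀ ε ∈ Set.Ioc (0:ℝ) 1, ∀ u : ℝ, |∫ s in Set.Iic u, δ ε s| ≤ M := by
    intro ε hε u
    have h1 : |∫ s in Set.Iic u, δ ε s| ≤ ∫ s in Set.Iic u, |δ ε s| := by
      simpa [Real.norm_eq_abs] using
        norm_integral_le_integral_norm (μ := volume.restrict (Set.Iic u)) (δ ε)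
    have h2 : (∫ s in Set.Iic u, |δ ε s|) ≤ ∫ s, |δ ε s| :=
      setIntegral_le_integral (hI ε hε).abs (ae_of_all _ fun s => abs_nonneg _)
    exact h1.trans (h2.trans (hMb ε hε))
  have hHcont : ∀ ε ∈ Set.Ioc (0:ℝ) 1, Continuous fun u => ∫ s in Set.Iic u, δ ε s := by
    intro ε hε
    have heq : (fun u => ∫ s in Set.Iic u, δ ε s)
        = fun u => (∫ s in Set.Iic (0:ℝ), δ ε s) + ∫ s in (0:ℝ)..u, δ ε s := by
      funext u
      rw [← intervalIntegral.integral_Iic_sub_Iic ((hI ε hε).integrableOn) ((hI ε hε).integrableOn)]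
      ring
    rw [heq]
    exact continuous_const.add
      (intervalIntegral.continuous_primitive (fun a b => (hI ε hε).intervalIntegrable) 0)
  have hHδ : ∀ ε ∈ Set.Ioc (0:ℝ) 1, Integrable fun u => (∫ s in Set.Iic u, δ ε s) * δ ε u :=
    fun ε hε => (hI ε hε).bdd_mul (hHcont ε hε).aestronglyMeasurable
      (c := M) (ae_of_all _ fun u => by simpa [Real.norm_eq_abs] using hHbd ε hε u)
  have part1 : ∀ c : ℝ,
      Filter.Tendsto (fun ε => ∫ u, (∫ s in Set.Iic u, δ ε s) * δ ε u)
        (nhdsWithin 0 (Set.Ioi 0)) (nhds c) →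
      ∀ ψ : ℝ → ℝ, ContDiff ℝ (⊤ : ℕ∞) ψ → HasCompactSupport ψ →
        Filter.Tendsto (fun ε => ∫ u, (∫ s in Set.Iic u, δ ε s) * δ ε u * ψ u)
          (nhdsWithin 0 (Set.Ioi 0)) (nhds (c * ψ 0)) := by
    intro c hc ψ hψ hψc
    have hψcont := hψ.continuous
    have hδψ : ∀ ε ∈ Set.Ioc (0:ℝ) 1, Integrable fun u => δ ε u * ψ u := fun ε hε =>
      ((hcont ε hε).mul hψcont).integrable_of_hasCompactSupport ((hcs ε hε).mul_right)
    have hHδψ : ∀ ε ∈ Set.Ioc (0:ℝ) 1,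
        Integrable fun u => (∫ s in Set.Iic u, δ ε s) * δ ε u * ψ u := by
      intro ε hε
      have := (hδψ ε hε).bdd_mul (hHcont ε hε).aestronglyMeasurable
        (c := M) (ae_of_all _ fun u => by simpa [Real.norm_eq_abs] using hHbd ε hε u)
      simpa [mul_assoc] using this
    have hdiff : Filter.Tendsto (fun ε => (∫ u, (∫ s in Set.Iic u, δ ε s) * δ ε u * ψ u)
        - (∫ u, (∫ s in Set.Iic u, δ ε s) * δ ε u) * ψ 0)
        (nhdsWithin 0 (Set.Ioi 0)) (nhds 0) := by
      rw [Metric.tendsto_nhdsWithin_nhds]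
      intro η hη
      obtain ⟨τ₀, hτ₀, hball⟩ := Metric.continuousAt_iff.mp hψcont.continuousAt
        (η / (2 * M * M)) (by positivity)
      refine ⟨min τ₀ 1, lt_min hτ₀ one_pos, ?_⟩
      intro ε hεpos hεd
      rw [Real.dist_eq, sub_zero] at hεd
      have hεabs : ε < min τ₀ 1 := by rwa [abs_of_pos hεpos] at hεd
      have hε1 : ε ∈ Set.Ioc (0:ℝ) 1 :=
        ⟨hεpos, le_of_lt (lt_of_lt_of_le hεabs (min_le_right _ _))⟩
      have hετ : ε < τ₀ := lt_of_lt_of_le hεabs (min_le_left _ _)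
      have e1 : (∫ u, (∫ s in Set.Iic u, δ ε s) * δ ε u) * ψ 0
          = ∫ u, (∫ s in Set.Iic u, δ ε s) * δ ε u * ψ 0 := (integral_mul_const _ _).symm
      have e2 : (∫ u, (∫ s in Set.Iic u, δ ε s) * δ ε u * ψ u)
          - (∫ u, (∫ s in Set.Iic u, δ ε s) * δ ε u) * ψ 0
          = ∫ u, (∫ s in Set.Iic u, δ ε s) * δ ε u * (ψ u - ψ 0) := by
        rw [e1, ← integral_sub (hHδψ ε hε1) ((hHδ ε hε1).mul_const (ψ 0))]
        congr 1; funext u; ring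
      rw [Real.dist_eq, sub_zero, e2]
      have hptwise : ∀ u, ‖(∫ s in Set.Iic u, δ ε s) * δ ε u * (ψ u - ψ 0)‖
          ≤ (M * (η / (2 * M * M))) * |δ ε u| := by
        intro u
        by_cases hu : δ ε u = 0
        · simp [hu]
        · have hu' : u ∈ tsupport (δ ε) := subset_closure hu
          have humem : |u| ≤ ε := abs_le.mpr ⟨(hsupp ε hε1 hu').1, (hsupp ε hε1 hu').2⟩
          have hψu : |ψ u - ψ 0| ≤ η / (2 * M * M) := by
            have hdu : dist u 0 < τ₀ := by
              rw [Real.dist_eq, sub_zero]; exact lt_of_le_of_lt humem hετ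
            have := hball hdu
            rw [Real.dist_eq] at this
            exact le_of_lt this
          have habs : ‖(∫ s in Set.Iic u, δ ε s) * δ ε u * (ψ u - ψ 0)‖
              = |∫ s in Set.Iic u, δ ε s| * |δ ε u| * |ψ u - ψ 0| := by
            rw [Real.norm_eq_abs, abs_mul, abs_mul]
          rw [habs]
          calc |∫ s in Set.Iic u, δ ε s| * |δ ε u| * |ψ u - ψ 0|
              ≤ M * |δ ε u| * (η / (2 * M * M)) := by
                gcongr
                exact hHbd ε hε1 u
            _ = (M * (η / (2 * M * M))) * |δ ε u| := by ring
      have hb : ‖∫ u, (∫ s in Set.Iic u, δ ε s) * δ ε u * (ψ u - ψ 0)‖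
          ≤ (M * (η / (2 * M * M))) * ∫ u, |δ ε u| := by
        have := norm_integral_le_of_norm_le (((hI ε hε1).abs).const_mul
          (M * (η / (2 * M * M)))) (ae_of_all _ hptwise)
        rwa [integral_const_mul] at this
      rw [Real.norm_eq_abs] at hb
      have hfin : (M * (η / (2 * M * M))) * (∫ u, |δ ε u|) ≤ (M * (η / (2 * M * M))) * M := by
        gcongr
        exact hMb ε hε1
      have hhalf : (M * (η / (2 * M * M))) * M = η / 2 := by
        field_simp
      have := hb.trans hfin
      rw [hhalf] at this
      linarith
    have hG : Filter.Tendsto (fun ε => (∫ u, (∫ s in Set.Iic u, δ ε s) * δ ε u) * ψ 0)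
        (nhdsWithin 0 (Set.Ioi 0)) (nhds (c * ψ 0)) := hc.mul_const _
    have := hdiff.add hG
    simpa using this
  refine ⟨part1, ?_⟩
  intro heven ψ hψ hψc
  have half : ∀ ε ∈ Set.Ioc (0:ℝ) 1,
      (∫ u, (∫ s in Set.Iic u, δ ε s) * δ ε u) = 1 / 2 := by
    intro ε hε
    have hHneg : ∀ u : ℝ, (∫ s in Set.Iic (-u), δ ε s) = 1 - ∫ s in Set.Iic u, δ ε s := by
      intro u
      have h1 : (∫ s in Set.Iic (-u), δ ε s) = ∫ s in Set.Iic (-u), δ ε (-s) := by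
        congr 1; funext s; rw [heven ε hε]
      rw [h1, integral_comp_neg_Iic, neg_neg]
      have h2 := intervalIntegral.integral_Iic_add_Ioi (b := u) ((hI ε hε).integrableOn) ((hI ε hε).integrableOn)
      rw [hint ε hε] at h2
      linarith
    have key : (∫ u, (∫ s in Set.Iic u, δ ε s) * δ ε u)
        = ∫ u, (∫ s in Set.Iic (-u), δ ε s) * δ ε (-u) :=
      (integral_neg_eq_self (fun u => (∫ s in Set.Iic u, δ ε s) * δ ε u) volume).symm
    have key2 : (∫ u, (∫ s in Set.Iic (-u), δ ε s) * δ ε (-u))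
        = ∫ u, (1 - (∫ s in Set.Iic u, δ ε s)) * δ ε u := by
      congr 1; funext u; rw [hHneg u, heven ε hε]
    have key3 : (∫ u, (1 - (∫ s in Set.Iic u, δ ε s)) * δ ε u)
        = 1 - ∫ u, (∫ s in Set.Iic u, δ ε s) * δ ε u := by
      have heq : (fun u => (1 - (∫ s in Set.Iic u, δ ε s)) * δ ε u)
          = fun u => δ ε u - (∫ s in Set.Iic u, δ ε s) * δ ε u := by funext u; ring
      rw [heq, integral_sub (hI ε hε) (hHδ ε hε), hint ε hε]
    have := key.trans (key2.trans key3)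
    linarith
  have hmem : Set.Ioc (0:ℝ) 1 ∈ nhdsWithin 0 (Set.Ioi 0) :=
    mem_nhdsWithin.mpr ⟨Set.Iio 1, isOpen_Iio, by norm_num,
      fun x hx => ⟨hx.2, le_of_lt hx.1⟩⟩
  have htend : Filter.Tendsto (fun ε => ∫ u, (∫ s in Set.Iic u, δ ε s) * δ ε u)
      (nhdsWithin 0 (Set.Ioi 0)) (nhds (1 / 2)) := by
    apply Filter.Tendsto.congr' _ tendsto_const_nhds
    filter_upwards [hmem] with ε hε
    exact (half ε hε).symm
  exact part1 (1 / 2) htend ψ hψ hψc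
end

section
/- Consider the regularized geodesic equation ẍ_ε(u) = (1/2) f'(x_ε(u)) δ_ε(u) on ℝ with f ∈ C^∞(ℝ), where (δ_ε) is a strict delta net with supp δ_ε ⊆ [−ε,ε], ∫δ_ε = 1, δ_ε ≥ 0, and initial conditions x_ε(−1) = x₀, ẋ_ε(−1) = 0. Then the solutions x_ε converge uniformly on compact subsets of ℝ to the broken straight line x(u) = x₀ + (1/2) f'(x₀) H(u) u, where H is the Heaviside function. -/
open MeasureTheory

open Set intervalIntegral in

open MeasureTheory Set

/-- A continuous function whose topological support lies in `Icc (-ε) ε`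
vanishes outside `Ioo (-ε) ε`. -/
lemma zero_outside_Ioo {ε : ℝ} {d : ℝ → ℝ} (hc : Continuous d)
    (hs : tsupport d ⊆ Set.Icc (-ε) ε) :
    ∀ t, t ∉ Set.Ioo (-ε) ε → d t = 0 := by
  intro t ht
  by_contra hd
  have hmem : t ∈ Set.Icc (-ε) ε := hs (subset_tsupport d hd)
  have hcases : t = -ε ∨ t = ε := by
    rcases hmem with ⟨h1, h2⟩
    rcases lt_or_eq_of_le h1 with h1' | h1'
    · rcases lt_or_eq_of_le h2 with h2' | h2'
      · exact absurd ⟨h1', h2'⟩ ht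
      · exact Or.inr h2'
    · exact Or.inl h1'.symm
  have hev : ∀ᶠ s in nhds t, d s ≠ 0 := hc.continuousAt.eventually_ne hd
  rcases hcases with h | h
  · have hev' : ∀ᶠ s in nhdsWithin t (Set.Iio t), d s ≠ 0 :=
      eventually_nhdsWithin_of_eventually_nhds hev
    obtain ⟨s, hs1, hs2⟩ := (hev'.and (eventually_mem_nhdsWithin)).exists
    have : s ∈ Set.Icc (-ε) ε := hs (subset_tsupport d hs1)
    have : -ε ≤ s := this.1
    subst h
    exact absurd this (not_le.mpr hs2)
  · have hev' : ∀ᶠ s in nhdsWithin t (Set.Ioi t), d s ≠ 0 :=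
      eventually_nhdsWithin_of_eventually_nhds hev
    obtain ⟨s, hs1, hs2⟩ := (hev'.and (eventually_mem_nhdsWithin)).exists
    have : s ∈ Set.Icc (-ε) ε := hs (subset_tsupport d hs1)
    have : s ≤ ε := this.2
    subst h
    exact absurd this (not_le.mpr hs2)

open Set intervalIntegral in

lemma pointwise_estimate (C₁ C₂ ε : ℝ) (hε : 0 < ε) (hε1 : ε ≤ 1)
    (hC₁0 : 0 ≤ C₁) (hC₂0 : 0 ≤ C₂)
    (f' d P V : ℝ → ℝ)
    (hC₁ : ∀ y, |f' y| ≤ C₁)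
    (hf'c : Continuous f')
    (hlip : ∀ a b, |f' a - f' b| ≤ C₂ * |a - b|)
    (hdc : Continuous d) (hd0 : ∀ t, t ∉ Set.Ioo (-ε) ε → d t = 0)
    (hdint : ∫ s, d s = 1) (hdpos : ∀ s, 0 ≤ d s)
    (x₀ : ℝ)
    (hP : ∀ u, HasDerivAt P (V u) u)
    (hV : ∀ u, HasDerivAt V ((1/2) * f' (P u) * d u) u)
    (hP0 : P (-1) = x₀) (hV0 : V (-1) = 0) (u : ℝ) :
    |P u - (x₀ + (1/2) * f' x₀ * (if 0 ≤ u then u else 0))|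
      ≤ (3/2) * C₁ * ε + (1/2) * C₁ * C₂ * ε * |u| := by
  have hPc : Continuous P := continuous_iff_continuousAt.mpr fun t => (hP t).continuousAt
  have hVc : Continuous V := continuous_iff_continuousAt.mpr fun t => (hV t).continuousAt
  set g : ℝ → ℝ := fun t => (1/2) * f' (P t) * d t with hg
  have hgc : Continuous g := by continuity
  -- integrability of d
  have hdcs : HasCompactSupport d :=
    HasCompactSupport.intro isCompact_Icc
      (fun t ht => hd0 t (fun h => ht (Set.Ioo_subset_Icc_self h)))
  have hdintg : Integrable d := hdc.integrable_of_hasCompactSupport hdcs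
  -- FTC facts
  have ftcV : ∀ a b : ℝ, (∫ t in a..b, g t) = V b - V a := fun a b =>
    integral_eq_sub_of_hasDerivAt (fun t _ => hV t) (hgc.intervalIntegrable a b)
  have ftcP : ∀ a b : ℝ, (∫ t in a..b, V t) = P b - P a := fun a b =>
    integral_eq_sub_of_hasDerivAt (fun t _ => hP t) (hVc.intervalIntegrable a b)
  -- g vanishes at or below -ε
  have hgz : ∀ t, t ∉ Set.Ioo (-ε) ε → g t = 0 := fun t ht => by
    simp [hg, hd0 t ht]
  -- V vanishes on (-∞, -ε]
  have hVz : ∀ s, s ≤ -ε → V s = 0 := by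
    intro s hs
    have h0 : (∫ t in (-1:ℝ)..s, g t) = 0 := by
      rw [intervalIntegral.integral_congr (g := fun _ => (0:ℝ)), intervalIntegral.integral_zero]
      intro t ht
      have ht' : t ≤ -ε := by
        rcases Set.mem_uIcc.mp ht with h | h
        · exact h.2.trans hs
        · exact h.2.trans (neg_le_neg hε1)
      exact hgz t (fun hmem => absurd hmem.1 (not_lt.mpr ht'))
    have := ftcV (-1) s
    rw [h0, hV0] at this
    linarith
  -- P = x₀ on (-∞, -ε]
  have hPz : ∀ s, s ≤ -ε → P s = x₀ := by
    intro s hs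
    have h0 : (∫ t in (-1:ℝ)..s, V t) = 0 := by
      rw [intervalIntegral.integral_congr (g := fun _ => (0:ℝ)), intervalIntegral.integral_zero]
      intro t ht
      have ht' : t ≤ -ε := by
        rcases Set.mem_uIcc.mp ht with h | h
        · exact h.2.trans hs
        · exact h.2.trans (neg_le_neg hε1)
      exact hVz t ht'
    have := ftcP (-1) s
    rw [h0, hP0] at this
    linarith
  -- |V| ≤ C₁ / 2 everywhere
  have hgabs : ∀ t, |g t| ≤ (C₁/2) * d t := by
    intro t
    have : |g t| = (1/2) * |f' (P t)| * d t := by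
      rw [hg]; simp [abs_mul, abs_of_nonneg (hdpos t)]
    rw [this]
    have := hC₁ (P t)
    nlinarith [hdpos t, abs_nonneg (f' (P t))]
  have hdle : ∀ a b : ℝ, a ≤ b → (∫ t in a..b, d t) ≤ 1 := by
    intro a b hab
    rw [intervalIntegral.integral_of_le hab, ← hdint]
    exact setIntegral_le_integral hdintg (Filter.Eventually.of_forall hdpos)
  have hVb : ∀ s, |V s| ≤ C₁/2 := by
    intro s
    rcases le_or_gt s (-ε) with hs | hs
    · rw [hVz s hs]; simp; positivity
    · have hVs : V s = ∫ t in (-ε)..s, g t := by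
        rw [ftcV, hVz (-ε) le_rfl, sub_zero]
      rw [hVs]
      calc |∫ t in (-ε)..s, g t| ≤ ∫ t in (-ε)..s, |g t| :=
            intervalIntegral.abs_integral_le_integral_abs hs.le
        _ ≤ ∫ t in (-ε)..s, (C₁/2) * d t := by
            apply intervalIntegral.integral_mono_on hs.le
              (hgc.abs.intervalIntegrable _ _)
              ((continuous_const.mul hdc).intervalIntegrable _ _)
            intro t _; exact hgabs t
        _ = (C₁/2) * ∫ t in (-ε)..s, d t := intervalIntegral.integral_const_mul _ _
        _ ≤ (C₁/2) * 1 := by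
            apply mul_le_mul_of_nonneg_left (hdle _ _ hs.le) (by positivity)
        _ = C₁/2 := mul_one _
  -- |P s - x₀| ≤ C₁ * ε for s ≤ ε
  have hPnear : ∀ s, s ≤ ε → |P s - x₀| ≤ C₁ * ε := by
    intro s hs
    rcases le_or_gt s (-ε) with h | h
    · rw [hPz s h]; simp; positivity
    · have : P s - x₀ = ∫ t in (-ε)..s, V t := by
        rw [ftcP, hPz (-ε) le_rfl]
      rw [this]
      have hb := intervalIntegral.norm_integral_le_of_norm_le_const
        (C := C₁/2) (f := V) (a := -ε) (b := s) (fun t _ => by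
          rw [Real.norm_eq_abs]; exact hVb t)
      rw [Real.norm_eq_abs] at hb
      have : |s - (-ε)| ≤ 2 * ε := by
        rw [abs_of_nonneg (by linarith)]; linarith
      nlinarith [abs_nonneg (∫ t in (-ε)..s, V t)]
  -- key pointwise bound for the integrand difference
  have hg2 : ∀ t, |f' (P t) * d t - f' x₀ * d t| ≤ (C₂ * (C₁ * ε)) * d t := by
    intro t
    rw [← sub_mul, abs_mul, abs_of_nonneg (hdpos t)]
    by_cases ht : t ∈ Set.Ioo (-ε) ε
    · apply mul_le_mul_of_nonneg_right _ (hdpos t)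
      calc |f' (P t) - f' x₀| ≤ C₂ * |P t - x₀| := hlip _ _
        _ ≤ C₂ * (C₁ * ε) := mul_le_mul_of_nonneg_left (hPnear t ht.2.le) hC₂0
    · rw [hd0 t ht]; simp
  -- V is ε-close to (1/2) f'(x₀) for s ≥ ε
  have hVinf : ∀ s, ε ≤ s → |V s - (1/2) * f' x₀| ≤ (1/2) * (C₂ * (C₁ * ε)) := by
    intro s hs
    have hVs : V s = ∫ t, g t := by
      have h1 : V s = ∫ t in (-1:ℝ)..s, g t := by rw [ftcV, hV0, sub_zero]
      rw [h1]
      apply intervalIntegral.integral_eq_integral_of_support_subset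
      intro t ht
      have htI : t ∈ Set.Ioo (-ε) ε := by
        by_contra hc'
        exact ht (hgz t hc')
      exact ⟨lt_of_le_of_lt (neg_le_neg hε1) htI.1, htI.2.le.trans hs⟩
    have hgi : Integrable g := hgc.integrable_of_hasCompactSupport
      (hdcs.mono (fun t ht => by
        simp only [Function.mem_support, hg] at ht ⊢
        intro h0; exact ht (by rw [h0]; ring)))
    have hci : Integrable (fun t => (1/2) * f' x₀ * d t) := hdintg.const_mul _
    have h2 : V s - (1/2) * f' x₀ = ∫ t, (g t - (1/2) * f' x₀ * d t) := by
      rw [integral_sub hgi hci, ← hVs, MeasureTheory.integral_const_mul, hdint, mul_one]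
    rw [h2]
    calc |∫ t, (g t - (1/2) * f' x₀ * d t)| ≤ ∫ t, |g t - (1/2) * f' x₀ * d t| := by
          simpa [Real.norm_eq_abs] using norm_integral_le_integral_norm
            (fun t => g t - (1/2) * f' x₀ * d t)
      _ ≤ ∫ t, (1/2) * ((C₂ * (C₁ * ε)) * d t) := by
          apply integral_mono ((hgi.sub hci).abs) ((hdintg.const_mul _).const_mul _)
          intro t
          simp only [Pi.sub_apply]
          have : g t - (1/2) * f' x₀ * d t = (1/2) * (f' (P t) * d t - f' x₀ * d t) := by
            rw [hg]; ring
          rw [this, abs_mul]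
          simp only [abs_of_nonneg (by norm_num : (0:ℝ) ≤ 1/2)]
          exact mul_le_mul_of_nonneg_left (hg2 t) (by norm_num)
      _ = (1/2) * (C₂ * (C₁ * ε)) := by
          rw [MeasureTheory.integral_const_mul, MeasureTheory.integral_const_mul, hdint]; ring
  -- now the three cases
  rcases le_or_gt u (-ε) with hu | hu
  · rw [hPz u hu, if_neg (by intro h; linarith)]
    simp only [mul_zero, add_zero, sub_self, abs_zero]
    positivity
  rcases lt_or_ge u ε with hu2 | hu2
  · -- middle zone
    have h1 : |P u - x₀| ≤ C₁ * ε := hPnear u hu2.le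
    have hi : |if 0 ≤ u then u else 0| ≤ ε := by
      split
      · rw [abs_of_nonneg ‹0 ≤ u›]; exact hu2.le
      · simpa using hε.le
    have h2 : |(1/2) * f' x₀ * (if 0 ≤ u then u else 0)| ≤ (1/2) * (C₁ * ε) := by
      rw [abs_mul, abs_mul, abs_of_nonneg (by norm_num : (0:ℝ) ≤ 1/2)]
      have hfx := hC₁ x₀
      have := mul_le_mul hfx hi (abs_nonneg _) hC₁0
      nlinarith
    have h3 : |P u - (x₀ + (1/2) * f' x₀ * (if 0 ≤ u then u else 0))|
        ≤ |P u - x₀| + |(1/2) * f' x₀ * (if 0 ≤ u then u else 0)| := by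
      have e : P u - (x₀ + (1/2) * f' x₀ * (if 0 ≤ u then u else 0))
          = (P u - x₀) - (1/2) * f' x₀ * (if 0 ≤ u then u else 0) := by ring
      rw [e]; exact abs_sub _ _
    nlinarith [abs_nonneg u,
      mul_nonneg (mul_nonneg hC₁0 hC₂0) (mul_nonneg hε.le (abs_nonneg u))]
  · -- u ≥ ε
    have hu0 : 0 ≤ u := le_trans hε.le hu2
    rw [if_pos hu0]
    set c := (1/2) * f' x₀ with hc
    have e1 : (∫ t in ε..u, (V t - c)) = (P u - P ε) - c * (u - ε) := by
      rw [intervalIntegral.integral_sub (hVc.intervalIntegrable _ _)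
        (intervalIntegrable_const), ftcP, intervalIntegral.integral_const]
      simp [smul_eq_mul]; ring
    have key : P u - (x₀ + c * u)
        = (P ε - x₀) + (∫ t in ε..u, (V t - c)) - c * ε := by
      rw [e1]; ring
    have b1 : |P ε - x₀| ≤ C₁ * ε := hPnear ε le_rfl
    have b2 : |∫ t in ε..u, (V t - c)| ≤ ((1/2) * (C₂ * (C₁ * ε))) * (u - ε) := by
      have hb := intervalIntegral.norm_integral_le_of_norm_le_const
        (C := (1/2) * (C₂ * (C₁ * ε))) (f := fun t => V t - c) (a := ε) (b := u)
        (fun t ht => by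
          rw [Real.norm_eq_abs]
          rw [Set.uIoc_of_le hu2] at ht
          exact hVinf t ht.1.le)
      rw [Real.norm_eq_abs, abs_of_nonneg (by linarith : (0:ℝ) ≤ u - ε)] at hb
      exact hb
    have b3 : |c * ε| ≤ (1/2) * C₁ * ε := by
      rw [hc, abs_mul, abs_mul, abs_of_nonneg (by norm_num : (0:ℝ) ≤ 1/2),
        abs_of_nonneg hε.le]
      have := hC₁ x₀
      nlinarith
    have habs : |P u - (x₀ + c * u)| ≤ |P ε - x₀| + |∫ t in ε..u, (V t - c)| + |c * ε| := by
      rw [key]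
      calc |(P ε - x₀) + (∫ t in ε..u, (V t - c)) - c * ε|
          ≤ |(P ε - x₀) + (∫ t in ε..u, (V t - c))| + |c * ε| := abs_sub _ _
        _ ≤ |P ε - x₀| + |∫ t in ε..u, (V t - c)| + |c * ε| := by
            have := abs_add_le (P ε - x₀) (∫ t in ε..u, (V t - c))
            linarith
    have huabs : |u| = u := abs_of_nonneg hu0
    have h9 : (0:ℝ) ≤ (1/2) * C₁ * C₂ * ε * ε := by positivity
    have h10 : (1/2) * (C₂ * (C₁ * ε)) * (u - ε)
        = (1/2) * C₁ * C₂ * ε * u - (1/2) * C₁ * C₂ * ε * ε := by ring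
    rw [huabs]
    linarith [habs, b1, b2, b3]

/-- Regularized geodesic equation for impulsive pp-waves (scalar model): solutions of
`ẍ_ε = (1/2) f'(x_ε) δ_ε(u)` with `x_ε(−1) = x₀`, `ẋ_ε(−1) = 0`, where `(δ_ε)` is a
nonnegative strict delta net and `f'` is bounded with bounded derivative, converge
uniformly on compact subsets of `ℝ` to the broken straight line
`u ↦ x₀ + (1/2) f'(x₀) H(u) u` with `H` the Heaviside function. -/
theorem impulsive_geodesic_limit (f : ℝ → ℝ) (hf : ContDiff ℝ (⊤ : ℕ∞) f)
    (hf' : ∃ C : ℝ, ∀ y, |deriv f y| ≤ C)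
    (hf'' : ∃ C : ℝ, ∀ y, |deriv (deriv f) y| ≤ C)
    (δ : ℝ → ℝ → ℝ)
    (hδsm : ∀ ε ∈ Set.Ioc (0:ℝ) 1, ContDiff ℝ (⊤ : ℕ∞) (δ ε))
    (hδsupp : ∀ ε ∈ Set.Ioc (0:ℝ) 1, tsupport (δ ε) ⊆ Set.Icc (-ε) ε)
    (hδint : ∀ ε ∈ Set.Ioc (0:ℝ) 1, ∫ s, δ ε s = 1)
    (hδpos : ∀ ε ∈ Set.Ioc (0:ℝ) 1, ∀ s, 0 ≤ δ ε s)
    (x₀ : ℝ) (x x' : ℝ → ℝ → ℝ)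
    (hode1 : ∀ ε ∈ Set.Ioc (0:ℝ) 1, ∀ u : ℝ, HasDerivAt (x ε) (x' ε u) u)
    (hode2 : ∀ ε ∈ Set.Ioc (0:ℝ) 1, ∀ u : ℝ,
      HasDerivAt (x' ε) ((1/2) * deriv f (x ε u) * δ ε u) u)
    (hinit1 : ∀ ε ∈ Set.Ioc (0:ℝ) 1, x ε (-1) = x₀)
    (hinit2 : ∀ ε ∈ Set.Ioc (0:ℝ) 1, x' ε (-1) = 0) :
    ∀ K : Set ℝ, IsCompact K →
      TendstoUniformlyOn (fun ε => x ε)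
        (fun u => x₀ + (1/2) * deriv f x₀ * (if 0 ≤ u then u else 0))
        (nhdsWithin 0 (Set.Ioi 0)) K := by
  obtain ⟨C, hC⟩ := hf'
  obtain ⟨C', hC'⟩ := hf''
  set C₁ := max C 0 with hC₁def
  set C₂ := max C' 0 with hC₂def
  have hC₁0 : 0 ≤ C₁ := le_max_right _ _
  have hC₂0 : 0 ≤ C₂ := le_max_right _ _
  have hC₁ : ∀ y, |deriv f y| ≤ C₁ := fun y => (hC y).trans (le_max_left _ _)
  have hC₂ : ∀ y, |deriv (deriv f) y| ≤ C₂ := fun y => (hC' y).trans (le_max_left _ _)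
  have hfinf : ContDiff ℝ ((⊤:ℕ∞) : WithTop ℕ∞) f := hf.of_le (by simp)
  have hdf : ContDiff ℝ ((⊤:ℕ∞) : WithTop ℕ∞) (deriv f) := (contDiff_infty_iff_deriv.mp hfinf).2
  have hf'c : Continuous (deriv f) := hdf.continuous
  have hdfdiff : Differentiable ℝ (deriv f) := hdf.differentiable (by simp)
  have hlip : ∀ a b : ℝ, |deriv f a - deriv f b| ≤ C₂ * |a - b| := by
    intro a b
    have := convex_univ.norm_image_sub_le_of_norm_deriv_le (f := deriv f)
      (fun y _ => (hdfdiff y)) (fun y _ => by rw [Real.norm_eq_abs]; exact hC₂ y)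
      (Set.mem_univ b) (Set.mem_univ a)
    simpa [Real.norm_eq_abs] using this
  intro K hK
  obtain ⟨r, hr⟩ := hK.isBounded.subset_closedBall 0
  set R := max r 0 with hRdef
  have hR0 : 0 ≤ R := le_max_right _ _
  have hKR : ∀ u ∈ K, |u| ≤ R := by
    intro u hu
    have := hr hu
    rw [Metric.mem_closedBall, Real.dist_eq, sub_zero] at this
    exact this.trans (le_max_left _ _)
  set M := (3/2) * C₁ + (1/2) * C₁ * C₂ * R + 1 with hMdef
  have hM : 0 < M := by
    have h1 : 0 ≤ (1/2) * C₁ * C₂ * R := by positivity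
    rw [hMdef]; linarith
  rw [Metric.tendstoUniformlyOn_iff]
  intro η hη
  have hmem : Set.Ioo (0:ℝ) (min 1 (η / M)) ∈ nhdsWithin (0:ℝ) (Set.Ioi 0) :=
    Ioo_mem_nhdsGT (lt_min one_pos (div_pos hη hM))
  filter_upwards [hmem] with ε hε
  intro u hu
  have hε0 : 0 < ε := hε.1
  have hε1 : ε ≤ 1 := (hε.2.trans_le (min_le_left _ _)).le
  have hεη : ε < η / M := hε.2.trans_le (min_le_right _ _)
  have hεIoc : ε ∈ Set.Ioc (0:ℝ) 1 := ⟨hε0, hε1⟩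
  have hδc : Continuous (δ ε) := (hδsm ε hεIoc).continuous
  have hd0 : ∀ t, t ∉ Set.Ioo (-ε) ε → δ ε t = 0 :=
    zero_outside_Ioo hδc (hδsupp ε hεIoc)
  have key := pointwise_estimate C₁ C₂ ε hε0 hε1 hC₁0 hC₂0 (deriv f) (δ ε)
    (x ε) (x' ε) hC₁ hf'c hlip hδc hd0 (hδint ε hεIoc) (hδpos ε hεIoc) x₀
    (hode1 ε hεIoc) (hode2 ε hεIoc) (hinit1 ε hεIoc) (hinit2 ε hεIoc) u
  rw [Real.dist_eq]
  have hcomm : |x₀ + (1/2) * deriv f x₀ * (if 0 ≤ u then u else 0) - x ε u|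
      = |x ε u - (x₀ + (1/2) * deriv f x₀ * (if 0 ≤ u then u else 0))| := abs_sub_comm _ _
  rw [hcomm]
  have hcoef : 0 ≤ (1/2) * C₁ * C₂ * ε :=
    mul_nonneg (mul_nonneg (mul_nonneg (by norm_num) hC₁0) hC₂0) hε0.le
  have hstep : (1/2) * C₁ * C₂ * ε * |u| ≤ (1/2) * C₁ * C₂ * ε * R :=
    mul_le_mul_of_nonneg_left (hKR u hu) hcoef
  have hb2 : (3/2) * C₁ * ε + (1/2) * C₁ * C₂ * ε * |u| ≤ ε * M := by
    have hEq : ε * M = (3/2) * C₁ * ε + (1/2) * C₁ * C₂ * ε * R + ε := by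
      rw [hMdef]; ring
    linarith
  have hεM : ε * M < η := (lt_div_iff₀ hM).mp hεη
  exact lt_of_le_of_lt (key.trans hb2) hεM
end

section
/- Under the Geroch–Traschen conditions (g_{ij}, g^{ij} locally bounded and ∂g_{ij} locally square integrable on Ω ⊆ ℝⁿ), each product Γ^i_{lm}Γ^m_{kj} of Christoffel symbols is locally integrable, hence all four terms in the coordinate expression R^i_{jkl} = ∂_l Γ^i_{kj} − ∂_k Γ^i_{lj} + Σ_m Γ^i_{lm}Γ^m_{kj} − Σ_m Γ^i_{km}Γ^m_{lj} are well-defined distributions on Ω. -/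
open MeasureTheory

/-- The Christoffel symbols `Γ^k_{ij}` formed from the inverse metric `gi` and the weak
derivatives `h k = ∂_k g`. -/
noncomputable def Christoffel (n : ℕ) (gi : (Fin n → ℝ) → Matrix (Fin n) (Fin n) ℝ)
    (h : Fin n → (Fin n → ℝ) → Matrix (Fin n) (Fin n) ℝ)
    (k i j : Fin n) (x : Fin n → ℝ) : ℝ :=
  (1/2) * ∑ m, gi x k m * (h i x j m + h j x i m - h m x i j)

/-- Under the Geroch–Traschen conditions (`g_{ij}`, `g^{ij}` locally bounded, `∂ g_{ij}`
locally square integrable), each Christoffel symbol is locally square integrable, each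
product `Γ^i_{lm} Γ^m_{kj}` of Christoffel symbols is locally integrable, and the
Christoffel symbols can be paired against derivatives of test functions; hence all four
terms of the coordinate curvature expression
`R^i_{jkl} = ∂_l Γ^i_{kj} − ∂_k Γ^i_{lj} + Σ_m Γ^i_{lm}Γ^m_{kj} − Σ_m Γ^i_{km}Γ^m_{lj}`
are well-defined distributions on `Ω`. -/
theorem geroch_traschen_curvature (n : ℕ) (Ω : Set (Fin n → ℝ)) (hΩ : IsOpen Ω)
    (g gi : (Fin n → ℝ) → Matrix (Fin n) (Fin n) ℝ)
    (h : Fin n → (Fin n → ℝ) → Matrix (Fin n) (Fin n) ℝ)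
    (hmeas_g : ∀ i j, AEStronglyMeasurable (fun x => g x i j) (volume.restrict Ω))
    (hmeas_gi : ∀ i j, AEStronglyMeasurable (fun x => gi x i j) (volume.restrict Ω))
    (hmeas_h : ∀ k i j, AEStronglyMeasurable (fun x => h k x i j) (volume.restrict Ω))
    (hlocb_g : ∀ x ∈ Ω, ∃ U ∈ nhds x, ∃ C : ℝ, ∀ y ∈ U ∩ Ω, ∀ i j, |g y i j| ≤ C)
    (hinv : ∀ x ∈ Ω, g x * gi x = 1)
    (hlocb_gi : ∀ x ∈ Ω, ∃ U ∈ nhds x, ∃ C : ℝ, ∀ y ∈ U ∩ Ω, ∀ i j, |gi y i j| ≤ C)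
    (hweak : ∀ (k i j : Fin n) (φ : (Fin n → ℝ) → ℝ),
      ContDiff ℝ (⊤ : ℕ∞) φ → HasCompactSupport φ → tsupport φ ⊆ Ω →
      (∫ x in Ω, g x i j * fderiv ℝ φ x (Pi.single k 1)) =
        - ∫ x in Ω, h k x i j * φ x)
    (hL2 : ∀ (k i j : Fin n), ∀ K : Set (Fin n → ℝ), K ⊆ Ω → IsCompact K →
      IntegrableOn (fun x => (h k x i j) ^ 2) K volume) :
    (∀ k i j : Fin n, ∀ K : Set (Fin n → ℝ), K ⊆ Ω → IsCompact K →
      IntegrableOn (fun x => (Christoffel n gi h k i j x) ^ 2) K volume) ∧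
    (∀ i l m k j : Fin n,
      LocallyIntegrableOn
        (fun x => Christoffel n gi h i l m x * Christoffel n gi h m k j x) Ω volume) ∧
    (∀ (i k j l : Fin n) (φ : (Fin n → ℝ) → ℝ),
      ContDiff ℝ (⊤ : ℕ∞) φ → HasCompactSupport φ → tsupport φ ⊆ Ω →
      IntegrableOn
        (fun x => Christoffel n gi h i k j x * fderiv ℝ φ x (Pi.single l 1)) Ω volume) := by
  -- The inverse metric is uniformly bounded on any compact subset of Ω.
  have hbound : ∀ K : Set (Fin n → ℝ), K ⊆ Ω → IsCompact K →
      ∃ C : ℝ, ∀ y ∈ K, ∀ i j, |gi y i j| ≤ C := by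
    intro K hKΩ hK
    choose U hU C hC using hlocb_gi
    obtain ⟨t, hcov⟩ := hK.elim_nhds_subcover' (fun x hx => U x (hKΩ hx))
      (fun x hx => hU x (hKΩ hx))
    refine ⟨∑ x ∈ t, max (C x.1 (hKΩ x.2)) 0, fun y hy i j => ?_⟩
    obtain ⟨x, hxt, hyU⟩ := Set.mem_iUnion₂.1 (hcov hy)
    calc |gi y i j| ≤ C x.1 (hKΩ x.2) := hC x.1 (hKΩ x.2) y ⟨hyU, hKΩ hy⟩ i j
      _ ≤ max (C x.1 (hKΩ x.2)) 0 := le_max_left _ _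
      _ ≤ ∑ x ∈ t, max (C x.1 (hKΩ x.2)) 0 :=
          Finset.single_le_sum (f := fun z : K => max (C z.1 (hKΩ z.2)) 0)
            (fun z _ => le_max_right _ _) hxt
  -- Each Christoffel symbol is in L² of any compact subset of Ω.
  have hm : ∀ K : Set (Fin n → ℝ), K ⊆ Ω → IsCompact K → ∀ k i j : Fin n,
      MemLp (fun x => Christoffel n gi h k i j x) 2 (volume.restrict K) := by
    intro K hKΩ hK k i j
    obtain ⟨C, hC⟩ := hbound K hKΩ hK
    have hKm : MeasurableSet K := hK.isClosed.measurableSet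
    have hres : (volume.restrict Ω).restrict K = volume.restrict K :=
      Measure.restrict_restrict_of_subset hKΩ
    have hmh : ∀ a b c : Fin n,
        AEStronglyMeasurable (fun x => h a x b c) (volume.restrict K) := by
      intro a b c
      have := (hmeas_h a b c).restrict (s := K)
      rwa [hres] at this
    have hmgi : ∀ a b : Fin n,
        AEStronglyMeasurable (fun x => gi x a b) (volume.restrict K) := by
      intro a b
      have := (hmeas_gi a b).restrict (s := K)
      rwa [hres] at this
    have hℒh : ∀ a b c : Fin n, MemLp (fun x => h a x b c) 2 (volume.restrict K) :=
      fun a b c => (memLp_two_iff_integrable_sq (hmh a b c)).2 (hL2 a b c K hKΩ hK)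
    have hsumm : ∀ m : Fin n,
        MemLp (fun x => gi x k m * (h i x j m + h j x i m - h m x i j)) 2
          (volume.restrict K) := by
      intro m
      have hS : MemLp (fun x => h i x j m + h j x i m - h m x i j) 2
          (volume.restrict K) := ((hℒh i j m).add (hℒh j i m)).sub (hℒh m i j)
      refine hS.of_le_mul (c := |C|)
        ((hmgi k m).mul (((hmh i j m).add (hmh j i m)).sub (hmh m i j))) ?_
      filter_upwards [ae_restrict_mem hKm] with x hx
      have : |gi x k m| ≤ |C| := (hC x hx k m).trans (le_abs_self C)
      calc ‖gi x k m * (h i x j m + h j x i m - h m x i j)‖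
          = |gi x k m| * ‖h i x j m + h j x i m - h m x i j‖ := by
            rw [norm_mul]; rfl
        _ ≤ |C| * ‖h i x j m + h j x i m - h m x i j‖ :=
            mul_le_mul_of_nonneg_right this (norm_nonneg _)
    have hsum : MemLp
        (fun x => ∑ m, gi x k m * (h i x j m + h j x i m - h m x i j)) 2
        (volume.restrict K) := by
      have := memLp_finsetSum (μ := volume.restrict K) (p := 2) Finset.univ
        (f := fun m x => gi x k m * (h i x j m + h j x i m - h m x i j))
        (fun m _ => hsumm m)
      simpa [Finset.sum_apply] using this
    simpa [Christoffel] using hsum.const_mul (1/2 : ℝ)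
  have half : (1 : ENNReal) / 1 = 1 / 2 + 1 / 2 := by
    rw [ENNReal.div_add_div_same, one_add_one_eq_two,
      ENNReal.div_self two_ne_zero ENNReal.ofNat_ne_top, one_div_one]
  refine ⟨fun k i j K hKΩ hK => (hm K hKΩ hK k i j).integrable_sq, ?_, ?_⟩
  · intro i l m k j
    rw [locallyIntegrableOn_iff hΩ.isLocallyClosed]
    intro K hKΩ hK
    have h1 := hm K hKΩ hK i l m
    have h2 := hm K hKΩ hK m k j
    have := h2.smul (φ := fun x => Christoffel n gi h i l m x) (r := 1) h1
    rw [memLp_one_iff_integrable] at this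
    exact this.congr (Filter.Eventually.of_forall fun x => by
      simp [Pi.smul_apply, smul_eq_mul])
  · intro i k j l φ hφ hφc hφΩ
    have hKc : IsCompact (tsupport φ) := hφc
    haveI : IsFiniteMeasure (volume.restrict (tsupport φ)) :=
      ⟨by rw [Measure.restrict_apply_univ]; exact hKc.measure_lt_top⟩
    have hΓint : IntegrableOn (fun x => Christoffel n gi h i k j x) (tsupport φ) volume :=
      (hm (tsupport φ) hφΩ hKc i k j).integrable one_le_two
    set ψ : (Fin n → ℝ) → ℝ := fun x => fderiv ℝ φ x (Pi.single l 1) with hψ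
    have hψcont : Continuous ψ :=
      (ContinuousLinearMap.apply ℝ ℝ (Pi.single l 1)).continuous.comp
        (hφ.continuous_fderiv (by simp))
    have hψsupp : Function.support ψ ⊆ tsupport φ := by
      intro x hx
      apply support_fderiv_subset (𝕜 := ℝ)
      intro hfz
      exact hx (by simp [hψ, hfz])
    have hψbdd : ∃ C, ∀ x, ‖ψ x‖ ≤ C := by
      have : HasCompactSupport ψ :=
        HasCompactSupport.of_support_subset_isCompact hKc hψsupp
      exact this.exists_bound_of_continuous hψcont
    have hint : IntegrableOn (fun x => ψ x * Christoffel n gi h i k j x)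
        (tsupport φ) volume := by
      refine Integrable.bdd_mul hΓint ?_ (ae_of_all _ hψbdd.choose_spec)
      exact (hψcont.aestronglyMeasurable).restrict
    have hint' : IntegrableOn (fun x => Christoffel n gi h i k j x * ψ x)
        (tsupport φ) volume :=
      hint.congr (Filter.Eventually.of_forall fun x => mul_comm _ _)
    have hsupp : Function.support (fun x => Christoffel n gi h i k j x * ψ x) ⊆
        tsupport φ := by
      intro x hx
      by_contra hxK
      exact hx (by simp [Function.notMem_support.1 (fun hc => hxK (hψsupp hc))])
    exact ((integrableOn_iff_integrable_of_support_subset hsupp).1 hint').integrableOn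
end
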